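/- arXiv:2401.08920 — 2 statements merged into one kernel-verified Lean document; each statement's English description precedes it below -/
import Mathlib

section
/- Let X be a discrete random variable, f deterministic with Y = f(X), and X̂ any random variable satisfying both p_{X̂} = p_X (perfect perceptual quality) and f(X̂) = Y almost surely, where X̂ is conditionally independent of X given Y. Then the conditional distribution of X̂ given Y = y equals p_{X|Y=y} for every y with P(Y = y) > 0. -/
/-- Uniqueness: if `X̂` (conditionally independent of `X` given `Y`, with conditional
law `q(·|y)`) has perfect perceptual quality `p_{X̂} = p_X` and satisfies the
idempotence constraint `f(X̂) = Y` almost surely, then its conditional law equals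
the posterior: `P(X̂ = x | Y = y) = P(X = x | Y = y)` whenever `P(Y = y) > 0`. -/
theorem perception_and_idempotence_force_posterior
    {𝒳 𝒴 : Type*} [Countable 𝒳] [Countable 𝒴] [DecidableEq 𝒴]
    (p : 𝒳 → ℝ) (hp0 : ∀ x, 0 ≤ p x) (hp1 : ∑' x, p x = 1)
    (f : 𝒳 → 𝒴)
    (pY : 𝒴 → ℝ) (hpY : ∀ y, pY y = ∑' x, if f x = y then p x else 0)
    (q : 𝒴 → 𝒳 → ℝ) (hq0 : ∀ y x, 0 ≤ q y x)
    (hqsum : ∀ y, 0 < pY y → ∑' x, q y x = 1)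
    (hmarg : ∀ x, ∑' y, pY y * q y x = p x)
    (hidem : ∀ y, 0 < pY y → (∑' x, if f x = y then q y x else 0) = 1) :
    ∀ y, 0 < pY y → ∀ x, q y x = (if f x = y then p x else 0) / pY y := by
  -- pY is nonnegative
  have hpY0 : ∀ y, 0 ≤ pY y := by
    intro y
    rw [hpY y]
    exact tsum_nonneg (fun x => by split <;> [exact hp0 x; exact le_rfl])
  -- support: if pY y > 0 and f x ≠ y then q y x = 0
  have hsupp : ∀ y, 0 < pY y → ∀ x, f x ≠ y → q y x = 0 := by
    intro y hy x hxy
    by_contra h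
    have hqpos : 0 < q y x := lt_of_le_of_ne (hq0 y x) (Ne.symm h)
    have hSq : Summable (q y) := by
      by_contra hS
      have := tsum_eq_zero_of_not_summable hS
      rw [hqsum y hy] at this
      norm_num at this
    have hle : ∀ z, (if f z = y then q y z else 0) ≤ q y z := by
      intro z; split <;> [exact le_rfl; exact hq0 y z]
    have hSg : Summable (fun z => if f z = y then q y z else 0) :=
      Summable.of_nonneg_of_le (fun z => by split <;> [exact hq0 y z; exact le_rfl]) hle hSq
    have hlt : (∑' z, if f z = y then q y z else 0) < ∑' z, q y z := by
      exact Summable.tsum_lt_tsum (i := x) hle (by simp [hxy, hqpos]) hSg hSq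
    rw [hqsum y hy, hidem y hy] at hlt
    exact lt_irrefl 1 hlt
  -- marginal reduces to a single term
  have hsingle : ∀ x, pY (f x) * q (f x) x = p x := by
    intro x
    rw [← hmarg x]
    refine (tsum_eq_single (f := fun y' => pY y' * q y' x) (f x) ?_).symm
    intro y' hy'
    rcases lt_or_eq_of_le (hpY0 y') with hpos | hzero
    · rw [hsupp y' hpos x (fun h => hy' h.symm), mul_zero]
    · rw [← hzero, zero_mul]
  intro y hy x
  by_cases hxy : f x = y
  · subst hxy
    have := hsingle x
    rw [if_pos rfl]
    field_simp
    linarith [this]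
  · rw [hsupp y hy x hxy, if_neg hxy, zero_div]
end

section
/- Let X be a square-integrable random vector, Y = f(X), and let X̂_Δ = E[X|Y] be the MSE-optimal reconstruction with MSE Δ* and X̂_p ~ p_{X|Y} a posterior sample conditionally independent of X given Y. For α ∈ [0,1], define the interpolation X̂_α = α X̂_p + (1−α) X̂_Δ. Then E[‖X − X̂_α‖²] = (1 + α²)Δ*. -/
lemma fiber_summable_aux {𝒳 𝒴 : Type*} [DecidableEq 𝒴] (f : 𝒳 → 𝒴) {g : 𝒳 → ℝ}
    (hg : Summable g) :
    Summable (fun z : 𝒴 × 𝒳 => if f z.2 = z.1 then g z.2 else 0) := by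
  have hinj : Function.Injective (fun x : 𝒳 => ((f x, x) : 𝒴 × 𝒳)) := by
    intro a b hab
    simpa using congrArg Prod.snd hab
  have hvan : ∀ z ∉ Set.range (fun x : 𝒳 => ((f x, x) : 𝒴 × 𝒳)),
      (if f z.2 = z.1 then g z.2 else 0) = 0 := by
    rintro ⟨y, x⟩ hz
    simp only
    rw [if_neg]
    intro h
    exact hz ⟨x, by simp [h]⟩
  rw [← hinj.summable_iff hvan]
  refine hg.congr fun x => ?_
  simp [Function.comp]

lemma fiber_tsum_aux {𝒳 𝒴 : Type*} [DecidableEq 𝒴] (f : 𝒳 → 𝒴) {g : 𝒳 → ℝ}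
    (hg : Summable g) :
    ∑' x, g x = ∑' y, ∑' x, if f x = y then g x else 0 := by
  have hinj : Function.Injective (fun x : 𝒳 => ((f x, x) : 𝒴 × 𝒳)) := by
    intro a b hab
    simpa using congrArg Prod.snd hab
  have hsupp : (Function.support fun z : 𝒴 × 𝒳 => if f z.2 = z.1 then g z.2 else 0)
      ⊆ Set.range (fun x : 𝒳 => ((f x, x) : 𝒴 × 𝒳)) := by
    rintro ⟨y, x⟩ hz
    by_cases h : f x = y
    · exact ⟨x, by simp [h]⟩
    · simp [h] at hz
  have h1 := hinj.tsum_eq (f := fun z : 𝒴 × 𝒳 => if f z.2 = z.1 then g z.2 else 0) hsupp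
  simp only [if_true, eq_self_iff_true] at h1
  calc ∑' x, g x = ∑' z : 𝒴 × 𝒳, if f z.2 = z.1 then g z.2 else 0 := by
        rw [← h1]
    _ = ∑' y, ∑' x, if f x = y then g x else 0 :=
        Summable.tsum_prod' (fiber_summable_aux f hg) (fun y => (fiber_summable_aux f hg).prod_factor y)

lemma fiber_marginal_aux {𝒳 𝒴 : Type*} [DecidableEq 𝒴] (f : 𝒳 → 𝒴) {g : 𝒳 → ℝ}
    (hg : Summable g) (hg0 : ∀ x, 0 ≤ g x) :
    Summable (fun y => ∑' x, if f x = y then g x else 0) := by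
  have h0 : 0 ≤ fun z : 𝒴 × 𝒳 => if f z.2 = z.1 then g z.2 else 0 := by
    intro z; dsimp only; split_ifs with h; exacts [hg0 _, le_refl _]
  exact ((summable_prod_of_nonneg h0).1 (fiber_summable_aux f hg)).2


/-- Perception–distortion interpolation: with `X̂_Δ = E[X|Y]` (MSE `Δ*`) and posterior
sample `X̂_p ~ p_{X|Y}` conditionally independent of `X` given `Y`, the interpolation
`X̂_α = α X̂_p + (1−α) X̂_Δ` satisfies `E[‖X − X̂_α‖²] = (1 + α²)Δ*` for `α ∈ [0,1]`. -/
theorem interpolation_distortion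
    {𝒳 𝒴 : Type*} [Countable 𝒳] [DecidableEq 𝒴] {n : ℕ}
    (p : 𝒳 → ℝ) (hp0 : ∀ x, 0 ≤ p x) (hp1 : ∑' x, p x = 1)
    (v : 𝒳 → EuclideanSpace ℝ (Fin n))
    (hint1 : Summable (fun x => p x * ‖v x‖))
    (hint2 : Summable (fun x => p x * ‖v x‖ ^ 2))
    (f : 𝒳 → 𝒴)
    (pY : 𝒴 → ℝ) (hpY : ∀ y, pY y = ∑' x, if f x = y then p x else 0)
    (m : 𝒴 → EuclideanSpace ℝ (Fin n))
    (hm : ∀ y, m y = (pY y)⁻¹ • ∑' x, (if f x = y then p x • v x else 0))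
    (Δ : ℝ) (hΔ : Δ = ∑' x, p x * ‖v x - m (f x)‖ ^ 2) :
    ∀ α ∈ Set.Icc (0 : ℝ) 1,
      (∑' z : 𝒳 × 𝒳,
          (if f z.1 = f z.2 then p z.1 * p z.2 / pY (f z.1) else 0) *
            ‖v z.1 - (α • v z.2 + (1 - α) • m (f z.1))‖ ^ 2)
        = (1 + α ^ 2) * Δ := by
  -- basic summability of p
  have hsp : Summable p := by
    by_contra h
    rw [tsum_eq_zero_of_not_summable h] at hp1
    exact one_ne_zero hp1.symm
  have hfib_p : ∀ y, Summable (fun x => if f x = y then p x else 0) := fun y =>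
    hsp.of_nonneg_of_le (fun x => by split_ifs; exacts [hp0 x, le_refl _])
      (fun x => by split_ifs; exacts [le_refl _, hp0 x])
  have hP0 : ∀ y, 0 ≤ pY y := fun y => by
    rw [hpY]; exact tsum_nonneg fun x => by split_ifs; exacts [hp0 x, le_refl _]
  have hple : ∀ x, p x ≤ pY (f x) := fun x => by
    rw [hpY]
    have := Summable.le_tsum (hfib_p (f x)) x
      (fun j _ => by split_ifs; exacts [hp0 j, le_refl _])
    simpa using this
  have hfib_pv : ∀ y, Summable (fun x => if f x = y then p x * ‖v x‖ else 0) := fun y =>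
    hint1.of_nonneg_of_le
      (fun x => by split_ifs; exacts [mul_nonneg (hp0 x) (norm_nonneg _), le_refl _])
      (fun x => by split_ifs
                   exacts [le_refl _, mul_nonneg (hp0 x) (norm_nonneg _)])
  have hfib_pv2 : ∀ y, Summable (fun x => if f x = y then p x * ‖v x‖ ^ 2 else 0) := fun y =>
    hint2.of_nonneg_of_le
      (fun x => by split_ifs; exacts [mul_nonneg (hp0 x) (by positivity), le_refl _])
      (fun x => by split_ifs
                   exacts [le_refl _, mul_nonneg (hp0 x) (by positivity)])
  have hSsum : ∀ y, Summable (fun x => if f x = y then p x • v x else 0) := fun y => by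
    apply Summable.of_norm
    refine (hfib_pv y).congr fun x => ?_
    split_ifs with h
    · simp [norm_smul, abs_of_nonneg (hp0 x)]
    · simp
  -- Cauchy-Schwarz per fiber
  set Q : 𝒴 → ℝ := fun y => ∑' x, if f x = y then p x * ‖v x‖ ^ 2 else 0 with hQdef
  have hQ0 : ∀ y, 0 ≤ Q y := fun y =>
    tsum_nonneg fun x => by split_ifs; exacts [mul_nonneg (hp0 x) (by positivity), le_refl _]
  have hCS : ∀ y, (∑' x, if f x = y then p x * ‖v x‖ else 0) ^ 2 ≤ pY y * Q y := by
    intro y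
    have hT0 : 0 ≤ ∑' x, if f x = y then p x * ‖v x‖ else 0 :=
      tsum_nonneg fun x => by split_ifs; exacts [mul_nonneg (hp0 x) (norm_nonneg _), le_refl _]
    have hPQ : 0 ≤ pY y * Q y := mul_nonneg (hP0 y) (hQ0 y)
    have hub : ∀ u : Finset 𝒳,
        (∑ x ∈ u, if f x = y then p x * ‖v x‖ else 0) ≤ Real.sqrt (pY y * Q y) := by
      intro u
      have hcs := Finset.sum_sq_le_sum_mul_sum_of_sq_eq_mul u
        (r := fun x => if f x = y then p x * ‖v x‖ else 0)
        (f := fun x => if f x = y then p x else 0)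
        (g := fun x => if f x = y then p x * ‖v x‖ ^ 2 else 0)
        (fun i _ => by split_ifs; exacts [hp0 i, le_refl _])
        (fun i _ => by split_ifs
                       exacts [mul_nonneg (hp0 i) (by positivity), le_refl _])
        (fun i _ => by split_ifs with h <;> ring)
      have h1 : (∑ x ∈ u, if f x = y then p x else 0) ≤ pY y := by
        rw [hpY]
        exact Summable.sum_le_tsum u (fun x _ => by split_ifs; exacts [hp0 x, le_refl _]) (hfib_p y)
      have h2 : (∑ x ∈ u, if f x = y then p x * ‖v x‖ ^ 2 else 0) ≤ Q y :=
        Summable.sum_le_tsum u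
          (fun x _ => by split_ifs; exacts [mul_nonneg (hp0 x) (by positivity), le_refl _])
          (hfib_pv2 y)
      have hsq : (∑ x ∈ u, if f x = y then p x * ‖v x‖ else 0) ^ 2 ≤ pY y * Q y := by
        refine hcs.trans ?_
        have h1' : 0 ≤ ∑ x ∈ u, if f x = y then p x else 0 :=
          Finset.sum_nonneg fun x _ => by split_ifs; exacts [hp0 x, le_refl _]
        have h2' : 0 ≤ ∑ x ∈ u, if f x = y then p x * ‖v x‖ ^ 2 else 0 :=
          Finset.sum_nonneg fun x _ =>
            by split_ifs; exacts [mul_nonneg (hp0 x) (by positivity), le_refl _]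
        exact mul_le_mul h1 h2 h2' (hP0 y)
      calc (∑ x ∈ u, if f x = y then p x * ‖v x‖ else 0)
          = Real.sqrt ((∑ x ∈ u, if f x = y then p x * ‖v x‖ else 0) ^ 2) := by
            rw [Real.sqrt_sq (Finset.sum_nonneg fun x _ =>
              by split_ifs; exacts [mul_nonneg (hp0 x) (norm_nonneg _), le_refl _])]
        _ ≤ Real.sqrt (pY y * Q y) := Real.sqrt_le_sqrt hsq
    have hT : (∑' x, if f x = y then p x * ‖v x‖ else 0) ≤ Real.sqrt (pY y * Q y) :=
      Summable.tsum_le_of_sum_le (hfib_pv y) hub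
    calc (∑' x, if f x = y then p x * ‖v x‖ else 0) ^ 2
        ≤ Real.sqrt (pY y * Q y) ^ 2 := by
          apply pow_le_pow_left₀ hT0 hT
      _ = pY y * Q y := Real.sq_sqrt hPQ
  -- bound on the conditional mean's second moment
  have hmQ : ∀ y, pY y * ‖m y‖ ^ 2 ≤ Q y := by
    intro y
    by_cases hP : pY y = 0
    · rw [hP]; simpa using hQ0 y
    have hPpos : 0 < pY y := lt_of_le_of_ne (hP0 y) (Ne.symm hP)
    have hS : ‖∑' x, if f x = y then p x • v x else 0‖
        ≤ ∑' x, if f x = y then p x * ‖v x‖ else 0 := by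
      refine (norm_tsum_le_tsum_norm ?_).trans_eq (tsum_congr fun x => ?_)
      · refine (hfib_pv y).congr fun x => ?_
        split_ifs with h
        · simp [norm_smul, abs_of_nonneg (hp0 x)]
        · simp
      · split_ifs with h
        · simp [norm_smul, abs_of_nonneg (hp0 x)]
        · simp
    have hm' : ‖m y‖ = (pY y)⁻¹ * ‖∑' x, if f x = y then p x • v x else 0‖ := by
      rw [hm y, norm_smul, Real.norm_eq_abs, abs_of_nonneg (inv_nonneg.2 (hP0 y))]
    have hS2 : ‖∑' x, if f x = y then p x • v x else 0‖ ^ 2 ≤ pY y * Q y := by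
      calc ‖∑' x, if f x = y then p x • v x else 0‖ ^ 2
          ≤ (∑' x, if f x = y then p x * ‖v x‖ else 0) ^ 2 :=
            pow_le_pow_left₀ (norm_nonneg _) hS 2
        _ ≤ pY y * Q y := hCS y
    rw [hm', mul_pow]
    rw [show pY y * ((pY y)⁻¹ ^ 2 * ‖∑' x, if f x = y then p x • v x else 0‖ ^ 2)
        = ‖∑' x, if f x = y then p x • v x else 0‖ ^ 2 / pY y by
      field_simp]
    rw [div_le_iff₀ hPpos]
    calc ‖∑' x, if f x = y then p x • v x else 0‖ ^ 2 ≤ pY y * Q y := hS2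
      _ = Q y * pY y := mul_comm _ _
  have hQmarg : Summable Q :=
    fiber_marginal_aux f hint2 (fun x => mul_nonneg (hp0 x) (by positivity))
  -- summability of x ↦ p x * ‖m (f x)‖²
  have hsm : Summable (fun x => p x * ‖m (f x)‖ ^ 2) := by
    apply summable_of_sum_le (c := ∑' y, Q y)
      (fun x => mul_nonneg (hp0 x) (by positivity))
    intro u
    have hmap : ∀ x ∈ u, f x ∈ u.image f := fun x hx => Finset.mem_image_of_mem f hx
    rw [← Finset.sum_fiberwise_of_maps_to hmap (fun x => p x * ‖m (f x)‖ ^ 2)]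
    have hinner : ∀ y ∈ u.image f,
        (∑ x ∈ u.filter (fun x => f x = y), p x * ‖m (f x)‖ ^ 2) ≤ Q y := by
      intro y _
      have h1 : (∑ x ∈ u.filter (fun x => f x = y), p x * ‖m (f x)‖ ^ 2)
          = (∑ x ∈ u.filter (fun x => f x = y), p x) * ‖m y‖ ^ 2 := by
        rw [Finset.sum_mul]
        refine Finset.sum_congr rfl fun x hx => ?_
        rw [(Finset.mem_filter.1 hx).2]
      have h2 : (∑ x ∈ u.filter (fun x => f x = y), p x) ≤ pY y := by
        rw [hpY]
        calc (∑ x ∈ u.filter (fun x => f x = y), p x)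
            = ∑ x ∈ u.filter (fun x => f x = y), (if f x = y then p x else 0) := by
              refine Finset.sum_congr rfl fun x hx => ?_
              rw [if_pos (Finset.mem_filter.1 hx).2]
          _ ≤ ∑' x, if f x = y then p x else 0 :=
              Summable.sum_le_tsum _ (fun x _ => by split_ifs; exacts [hp0 x, le_refl _]) (hfib_p y)
      calc (∑ x ∈ u.filter (fun x => f x = y), p x * ‖m (f x)‖ ^ 2)
          = (∑ x ∈ u.filter (fun x => f x = y), p x) * ‖m y‖ ^ 2 := h1
        _ ≤ pY y * ‖m y‖ ^ 2 := by
            apply mul_le_mul_of_nonneg_right h2 (by positivity)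
        _ ≤ Q y := hmQ y
    calc (∑ y ∈ u.image f, ∑ x ∈ u.filter (fun x => f x = y), p x * ‖m (f x)‖ ^ 2)
        ≤ ∑ y ∈ u.image f, Q y := Finset.sum_le_sum hinner
      _ ≤ ∑' y, Q y := Summable.sum_le_tsum _ (fun y _ => hQ0 y) hQmarg
  -- summability of the MSE-family
  have hA : Summable (fun x => p x * ‖v x - m (f x)‖ ^ 2) := by
    have hmaj : Summable (fun x => 2 * (p x * ‖v x‖ ^ 2) + 2 * (p x * ‖m (f x)‖ ^ 2)) :=
      (hint2.mul_left 2).add (hsm.mul_left 2)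
    have hle : ∀ x, p x * ‖v x - m (f x)‖ ^ 2
        ≤ 2 * (p x * ‖v x‖ ^ 2) + 2 * (p x * ‖m (f x)‖ ^ 2) := by
      intro x
      have h1 : ‖v x - m (f x)‖ ≤ ‖v x‖ + ‖m (f x)‖ := norm_sub_le _ _
      have h2 : ‖v x - m (f x)‖ ^ 2 ≤ (‖v x‖ + ‖m (f x)‖) ^ 2 :=
        pow_le_pow_left₀ (norm_nonneg _) h1 2
      nlinarith [hp0 x, norm_nonneg (v x), norm_nonneg (m (f x)),
        sq_nonneg (‖v x‖ - ‖m (f x)‖), mul_le_mul_of_nonneg_left h2 (hp0 x)]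
    exact Summable.of_nonneg_of_le (fun x => mul_nonneg (hp0 x) (by positivity)) hle hmaj
  -- conditional variance per fiber
  set R : 𝒴 → ℝ := fun y => ∑' x, if f x = y then p x * ‖v x - m y‖ ^ 2 else 0 with hRdef
  have hfibR_eq : ∀ y, (fun x => if f x = y then p x * ‖v x - m y‖ ^ 2 else 0)
      = (fun x => if f x = y then p x * ‖v x - m (f x)‖ ^ 2 else 0) := by
    intro y; funext x; split_ifs with h
    · rw [h]
    · rfl
  have hfib_A : ∀ y, Summable (fun x => if f x = y then p x * ‖v x - m (f x)‖ ^ 2 else 0) :=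
    fun y => hA.of_nonneg_of_le
      (fun x => by split_ifs; exacts [mul_nonneg (hp0 x) (by positivity), le_refl _])
      (fun x => by split_ifs
                   exacts [le_refl _, mul_nonneg (hp0 x) (by positivity)])
  have hRsum_fib : ∀ y, Summable (fun x => if f x = y then p x * ‖v x - m y‖ ^ 2 else 0) :=
    fun y => (hfibR_eq y) ▸ hfib_A y
  have hR0 : ∀ y, 0 ≤ R y := fun y =>
    tsum_nonneg fun x => by split_ifs; exacts [mul_nonneg (hp0 x) (by positivity), le_refl _]
  have hpzero : ∀ y, pY y = 0 → ∀ x, f x = y → p x = 0 := by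
    intro y hy x hx
    refine le_antisymm ((hple x).trans_eq ?_) (hp0 x)
    rw [hx, hy]
  have hRzero : ∀ y, pY y = 0 → R y = 0 := by
    intro y hy
    rw [hRdef]
    dsimp only
    rw [show (∑' x, if f x = y then p x * ‖v x - m y‖ ^ 2 else 0) = ∑' (_ : 𝒳), (0:ℝ) from
      tsum_congr fun x => by
        split_ifs with h
        · rw [hpzero y hy x h, zero_mul]
        · rfl]
    exact tsum_zero
  have hRmarg : Summable R := by
    have := fiber_marginal_aux f hA (fun x => mul_nonneg (hp0 x) (by positivity))
    refine this.congr fun y => ?_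
    rw [hRdef]
    dsimp only
    rw [hfibR_eq y]
  have hΔR : Δ = ∑' y, R y := by
    rw [hΔ, fiber_tsum_aux f hA]
    exact tsum_congr fun y => by rw [hRdef]; dsimp only; rw [hfibR_eq y]
  -- summability of x ↦ (p x / pY (f x)) * R (f x)
  have hB : Summable (fun x => p x / pY (f x) * R (f x)) := by
    apply summable_of_sum_le (c := ∑' y, R y)
      (fun x => mul_nonneg (div_nonneg (hp0 x) (hP0 _)) (hR0 _))
    intro u
    have hmap : ∀ x ∈ u, f x ∈ u.image f := fun x hx => Finset.mem_image_of_mem f hx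
    rw [← Finset.sum_fiberwise_of_maps_to hmap (fun x => p x / pY (f x) * R (f x))]
    have hinner : ∀ y ∈ u.image f,
        (∑ x ∈ u.filter (fun x => f x = y), p x / pY (f x) * R (f x)) ≤ R y := by
      intro y _
      have h1 : (∑ x ∈ u.filter (fun x => f x = y), p x / pY (f x) * R (f x))
          = (∑ x ∈ u.filter (fun x => f x = y), p x) * (R y / pY y) := by
        rw [Finset.sum_mul]
        refine Finset.sum_congr rfl fun x hx => ?_
        rw [(Finset.mem_filter.1 hx).2]
        ring
      rw [h1]
      by_cases hy : pY y = 0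
      · rw [hy, div_zero, mul_zero]
        exact hR0 y
      · have hypos : 0 < pY y := lt_of_le_of_ne (hP0 y) (Ne.symm hy)
        have h2 : (∑ x ∈ u.filter (fun x => f x = y), p x) ≤ pY y := by
          rw [hpY]
          calc (∑ x ∈ u.filter (fun x => f x = y), p x)
              = ∑ x ∈ u.filter (fun x => f x = y), (if f x = y then p x else 0) := by
                refine Finset.sum_congr rfl fun x hx => ?_
                rw [if_pos (Finset.mem_filter.1 hx).2]
            _ ≤ ∑' x, if f x = y then p x else 0 :=
                Summable.sum_le_tsum _ (fun x _ => by split_ifs; exacts [hp0 x, le_refl _]) (hfib_p y)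
        calc (∑ x ∈ u.filter (fun x => f x = y), p x) * (R y / pY y)
            ≤ pY y * (R y / pY y) :=
              mul_le_mul_of_nonneg_right h2 (div_nonneg (hR0 y) (hP0 y))
          _ = R y := by field_simp
    calc (∑ y ∈ u.image f, ∑ x ∈ u.filter (fun x => f x = y), p x / pY (f x) * R (f x))
        ≤ ∑ y ∈ u.image f, R y := Finset.sum_le_sum hinner
      _ ≤ ∑' y, R y := Summable.sum_le_tsum _ (fun y _ => hR0 y) hRmarg
  have hC : ∑' x, p x / pY (f x) * R (f x) = Δ := by
    rw [fiber_tsum_aux f hB, hΔR]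
    refine tsum_congr fun y => ?_
    have h1 : (fun x => if f x = y then p x / pY (f x) * R (f x) else 0)
        = fun x => (if f x = y then p x else 0) * (R y / pY y) := by
      funext x; split_ifs with h
      · rw [h]; ring
      · rw [zero_mul]
    rw [h1, tsum_mul_right, ← hpY y]
    by_cases hy : pY y = 0
    · rw [hy, div_zero, mul_zero, hRzero y hy]
    · field_simp
  -- now the main computation
  intro α hα
  have hswap : ∀ (c d : 𝒴) (r : ℝ), (if c = d then r else 0) = (if d = c then r else 0) :=
    fun c d r => if_congr eq_comm rfl rfl
  -- the three-term pointwise decomposition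
  have hpt : ∀ x1 x2 : 𝒳,
      (if f x1 = f x2 then p x1 * p x2 / pY (f x1) else 0) *
          ‖v x1 - (α • v x2 + (1 - α) • m (f x1))‖ ^ 2
      = (if f x2 = f x1 then p x2 else 0) * (‖v x1 - m (f x1)‖ ^ 2 * (p x1 / pY (f x1)))
        + (if f x2 = f x1 then p x2 * ‖v x2 - m (f x1)‖ ^ 2 else 0) *
            (α ^ 2 * (p x1 / pY (f x1)))
        + (inner ℝ (v x1 - m (f x1))
              (if f x2 = f x1 then p x2 • (v x2 - m (f x1)) else (0 : EuclideanSpace ℝ (Fin n)))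
              : ℝ) * (-(2 * α) * (p x1 / pY (f x1))) := by
    intro x1 x2
    by_cases h : f x1 = f x2
    · rw [if_pos h, if_pos h.symm, if_pos h.symm, if_pos h.symm]
      have hv : v x1 - (α • v x2 + (1 - α) • m (f x1))
          = (v x1 - m (f x1)) - α • (v x2 - m (f x1)) := by
        module
      rw [hv, norm_sub_sq_real, real_inner_smul_right, norm_smul, real_inner_smul_right,
        Real.norm_eq_abs, mul_pow, sq_abs]
      ring
    · rw [if_neg h, if_neg (fun hh => h hh.symm), if_neg (fun hh => h hh.symm),
        if_neg (fun hh => h hh.symm), inner_zero_right]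
      ring
  -- summability of the slices
  have hWnorm : ∀ x1, Summable (fun x2 => ‖(if f x2 = f x1 then p x2 • (v x2 - m (f x1))
      else (0 : EuclideanSpace ℝ (Fin n)))‖) := by
    intro x1
    refine Summable.of_nonneg_of_le (fun x2 => norm_nonneg _) (fun x2 => ?_)
      (hint1.add (hsp.mul_right ‖m (f x1)‖))
    split_ifs with h
    · rw [norm_smul, Real.norm_eq_abs, abs_of_nonneg (hp0 x2), ← mul_add]
      exact mul_le_mul_of_nonneg_left (norm_sub_le _ _) (hp0 x2)
    · simpa using add_nonneg (mul_nonneg (hp0 x2) (norm_nonneg _))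
        (mul_nonneg (hp0 x2) (norm_nonneg _))
  have hWsum : ∀ x1, Summable (fun x2 => (if f x2 = f x1 then p x2 • (v x2 - m (f x1))
      else (0 : EuclideanSpace ℝ (Fin n)))) := fun x1 => Summable.of_norm (hWnorm x1)
  have hinner_sum : ∀ x1, Summable (fun x2 => (inner ℝ (v x1 - m (f x1))
      (if f x2 = f x1 then p x2 • (v x2 - m (f x1)) else (0 : EuclideanSpace ℝ (Fin n)))
      : ℝ)) := by
    intro x1
    refine Summable.of_norm_bounded ((hWnorm x1).mul_left ‖v x1 - m (f x1)‖) fun x2 => ?_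
    rw [Real.norm_eq_abs]
    exact abs_real_inner_le_norm _ _
  have hs1 : ∀ x1, Summable (fun x2 => (if f x2 = f x1 then p x2 else 0) *
      (‖v x1 - m (f x1)‖ ^ 2 * (p x1 / pY (f x1)))) :=
    fun x1 => (hfib_p (f x1)).mul_right _
  have hs2 : ∀ x1, Summable (fun x2 => (if f x2 = f x1 then p x2 * ‖v x2 - m (f x1)‖ ^ 2 else 0) *
      (α ^ 2 * (p x1 / pY (f x1)))) :=
    fun x1 => (hRsum_fib (f x1)).mul_right _
  have hs3 : ∀ x1, Summable (fun x2 => (inner ℝ (v x1 - m (f x1))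
      (if f x2 = f x1 then p x2 • (v x2 - m (f x1)) else (0 : EuclideanSpace ℝ (Fin n)))
      : ℝ) * (-(2 * α) * (p x1 / pY (f x1)))) :=
    fun x1 => (hinner_sum x1).mul_right _
  have hslice : ∀ x1, Summable (fun x2 =>
      (if f x1 = f x2 then p x1 * p x2 / pY (f x1) else 0) *
        ‖v x1 - (α • v x2 + (1 - α) • m (f x1))‖ ^ 2) := by
    intro x1
    exact (((hs1 x1).add (hs2 x1)).add (hs3 x1)).congr fun x2 => (hpt x1 x2).symm
  -- the total sum of the posterior-sample weights vanishes
  have hWtsum : ∀ x1, (∑' x2, (if f x2 = f x1 then p x2 • (v x2 - m (f x1))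
      else (0 : EuclideanSpace ℝ (Fin n)))) = 0 := by
    intro x1
    by_cases hy : pY (f x1) = 0
    · rw [show (fun x2 => (if f x2 = f x1 then p x2 • (v x2 - m (f x1))
          else (0 : EuclideanSpace ℝ (Fin n)))) = fun _ => (0 : EuclideanSpace ℝ (Fin n)) from
        funext fun x2 => by
          split_ifs with h
          · rw [hpzero (f x1) hy x2 h, zero_smul]
          · rfl]
      exact tsum_zero
    · have heq : (fun x2 => (if f x2 = f x1 then p x2 • (v x2 - m (f x1))
          else (0 : EuclideanSpace ℝ (Fin n))))
          = fun x2 => (if f x2 = f x1 then p x2 • v x2 else 0)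
              - (if f x2 = f x1 then p x2 else 0) • m (f x1) := by
        funext x2; split_ifs with h
        · rw [smul_sub]
        · rw [zero_smul, sub_zero]
      rw [heq, Summable.tsum_sub (hSsum (f x1)) ((hfib_p (f x1)).smul_const _),
        Summable.tsum_smul_const (hfib_p (f x1)) _, ← hpY (f x1), hm (f x1), smul_smul,
        mul_inv_cancel₀ hy, one_smul, sub_self]
  -- key: the inner sums
  have key : ∀ x1, (∑' x2, (if f x1 = f x2 then p x1 * p x2 / pY (f x1) else 0) *
        ‖v x1 - (α • v x2 + (1 - α) • m (f x1))‖ ^ 2)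
      = p x1 * ‖v x1 - m (f x1)‖ ^ 2 + α ^ 2 * (p x1 / pY (f x1) * R (f x1)) := by
    intro x1
    rw [tsum_congr (fun x2 => hpt x1 x2)]
    rw [Summable.tsum_add ((hs1 x1).add (hs2 x1)) (hs3 x1), Summable.tsum_add (hs1 x1) (hs2 x1)]
    rw [tsum_mul_right, tsum_mul_right, tsum_mul_right]
    have e3 : (∑' x2, (inner ℝ (v x1 - m (f x1))
        (if f x2 = f x1 then p x2 • (v x2 - m (f x1)) else (0 : EuclideanSpace ℝ (Fin n)))
        : ℝ)) = 0 := by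
      have h' : (∑' x2, ((innerSL ℝ (v x1 - m (f x1)))
          (if f x2 = f x1 then p x2 • (v x2 - m (f x1))
            else (0 : EuclideanSpace ℝ (Fin n))))) = 0 := by
        rw [← ContinuousLinearMap.map_tsum _ (hWsum x1), hWtsum x1, map_zero]
      calc (∑' x2, (inner ℝ (v x1 - m (f x1))
          (if f x2 = f x1 then p x2 • (v x2 - m (f x1)) else (0 : EuclideanSpace ℝ (Fin n)))
          : ℝ))
          = ∑' x2, ((innerSL ℝ (v x1 - m (f x1)))
            (if f x2 = f x1 then p x2 • (v x2 - m (f x1))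
              else (0 : EuclideanSpace ℝ (Fin n)))) :=
            tsum_congr fun x2 => (innerSL_apply_apply _ _ _).symm
        _ = 0 := h'
    rw [e3, zero_mul, add_zero, ← hpY (f x1)]
    have e2 : (∑' x2, if f x2 = f x1 then p x2 * ‖v x2 - m (f x1)‖ ^ 2 else 0) = R (f x1) := by
      rw [hRdef]
    rw [e2]
    by_cases hy : pY (f x1) = 0
    · simp [hy, hRzero (f x1) hy, hpzero (f x1) hy x1 rfl]
    · field_simp
  -- assemble
  have hnn : 0 ≤ fun z : 𝒳 × 𝒳 => (if f z.1 = f z.2 then p z.1 * p z.2 / pY (f z.1) else 0) *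
      ‖v z.1 - (α • v z.2 + (1 - α) • m (f z.1))‖ ^ 2 := by
    intro z
    dsimp only
    apply mul_nonneg _ (by positivity)
    split_ifs with h
    · exact div_nonneg (mul_nonneg (hp0 _) (hp0 _)) (hP0 _)
    · exact le_refl _
  have hmarg : Summable (fun x1 => ∑' x2,
      (if f x1 = f x2 then p x1 * p x2 / pY (f x1) else 0) *
        ‖v x1 - (α • v x2 + (1 - α) • m (f x1))‖ ^ 2) := by
    refine (hA.add (hB.mul_left (α ^ 2))).congr fun x1 => ?_
    exact (key x1).symm
  have hF : Summable (fun z : 𝒳 × 𝒳 =>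
      (if f z.1 = f z.2 then p z.1 * p z.2 / pY (f z.1) else 0) *
        ‖v z.1 - (α • v z.2 + (1 - α) • m (f z.1))‖ ^ 2) :=
    (summable_prod_of_nonneg hnn).2 ⟨hslice, hmarg⟩
  rw [Summable.tsum_prod' hF hslice]
  rw [tsum_congr key]
  rw [Summable.tsum_add hA (hB.mul_left (α ^ 2)), tsum_mul_left, hC, ← hΔ]
  ring
end
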